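/- Lemma 1.4. Let 𝕏→𝕏′=(X,𝒳′,μ,G)→𝕐 be a short factors series, let G′ be an R-submodule of the lcsc R-module G, and let Γ be a countable dense subgroup of G′. Let δ≥0, ε>0, φ∈L²(X,𝒳′,μ) and φ₁,…,φ_k∈L²(X,𝒳,μ) be such that for every γ∈Γ, min_{1≤i≤k}‖U_γφ−φ_i‖_{2,y}<ε for all y∈Y outside a set of ν-measure ≤δ. Then for every g∈G′, min_{1≤i≤k}‖U_gφ−φ_i‖_{2,y}<4ε for all y∈Y outside a set of ν-measure ≤4δ. Consequently L²_FKap(X,𝒳′,μ,G:G′)=L²_FKap(X,𝒳′,μ,G:Γ). -/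

import Mathlib

open MeasureTheory Filter Set Topology
open scoped ENNReal

noncomputable section

namespace FE

variable {R G X Y : Type*}

/-- The disintegration `μ = ∫_Y μ_y dν(y)` of `μ` over an extension `π : X → Y`:
each `μ_y` is a probability measure on `X`, `y ↦ μ_y B` is measurable, and
`μ (B ∩ π⁻¹ A) = ∫_A μ_y B dν`, coding `μ_{π x} B = E_μ(1_B | π⁻¹[𝒴])(x)`. -/
structure Disintegration [mXa : MeasurableSpace X] [mYa : MeasurableSpace Y]
    (μ : Measure X) (ν : Measure Y) (π : X → Y)
    (μy : Y → Measure X) : Prop where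
  prob : ∀ y, IsProbabilityMeasure (μy y)
  meas : ∀ B : Set X, MeasurableSet B → Measurable fun y => μy y B
  eq : ∀ B : Set X, MeasurableSet B → ∀ A : Set Y, MeasurableSet A →
    μ (B ∩ π ⁻¹' A) = ∫⁻ y in A, μy y B ∂ν

/-- The relative product (condition-independent) measure `μ ⊗_Y μ = ∫_Y μ_y ⊗ μ_y dν`. -/
def relProd [mXa : MeasurableSpace X] [mYa : MeasurableSpace Y]
    (ν : Measure Y) (μy : Y → Measure X) : Measure (X × X) :=
  ν.bind fun y => (μy y).prod (μy y)

/-- The relative convolution `H *_Y φ (x) = ∫_X H(x,x') φ(x') dμ_{π x}(x')`. -/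
def relConv [mXa : MeasurableSpace X] (μy : Y → Measure X) (π : X → Y)
    (H : X × X → ℂ) (φ : X → ℂ) : X → ℂ :=
  fun x => ∫ x', H (x, x') * φ x' ∂(μy (π x))

/-- Membership in `L²(X, 𝒳', μ)` where `m'` is a sub-σ-algebra `𝒳'`. -/
def MemL2 (m' : MeasurableSpace X) [mXa : MeasurableSpace X] (μ : Measure X)
    (φ : X → ℂ) : Prop :=
  Measurable[m'] φ ∧ MemLp φ 2 μ

/-- Essential boundedness. -/
def BddAE {α : Type*} [MeasurableSpace α] (ρ : Measure α) (f : α → ℂ) : Prop :=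
  ∃ C : ℝ, ∀ᵐ a ∂ρ, ‖f a‖ ≤ C

/-- `φ` is FK almost periodic for `Γ`: for every `ε > 0` there are finitely many
`ψ₁, …, ψ_k ∈ L²(X, 𝒳, μ)` such that for every `g ∈ Γ`,
`min_j ‖U_g φ − ψ_j‖_{2,y} < ε` for ν-a.e. `y`. -/
def IsFKap [mXa : MeasurableSpace X] [mYa : MeasurableSpace Y] (act : G → X → X)
    (μ : Measure X) (ν : Measure Y) (μy : Y → Measure X)
    (Γ : Set G) (φ : X → ℂ) : Prop :=
  ∀ ε : ℝ, 0 < ε → ∃ (k : ℕ) (ψ : Fin k → X → ℂ),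
    (∀ j, MemLp (ψ j) 2 μ) ∧
    ∀ g ∈ Γ, ∀ᵐ y ∂ν,
      ∃ j, eLpNorm (fun x => φ (act g x) - ψ j x) 2 (μy y) < ENNReal.ofReal ε

/-- `φ` is FK ν-almost almost-periodic for `Γ`: for all `δ, ε > 0` there are finitely many
`ψ₁, …, ψ_k ∈ L²(X, 𝒳, μ)` such that for every `g ∈ Γ`,
`min_j ‖U_g φ − ψ_j‖_{2,y} < ε` outside a set of `y` of ν-measure less than `δ`. -/
def IsFKaap [mXa : MeasurableSpace X] [mYa : MeasurableSpace Y] (act : G → X → X)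
    (μ : Measure X) (ν : Measure Y) (μy : Y → Measure X)
    (Γ : Set G) (φ : X → ℂ) : Prop :=
  ∀ δ ε : ℝ, 0 < δ → 0 < ε → ∃ (k : ℕ) (ψ : Fin k → X → ℂ),
    (∀ j, MemLp (ψ j) 2 μ) ∧
    ∀ g ∈ Γ,
      ν {y | ¬ ∃ j, eLpNorm (fun x => φ (act g x) - ψ j x) 2 (μy y) < ENNReal.ofReal ε}
        < ENNReal.ofReal δ

/-- The extension `π : 𝕏' → 𝕐` is relatively compact for `Γ`:
the FK a.p. (for `Γ`) functions are dense in `L²(X, 𝒳', μ)`. -/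
def RelCompact (m' : MeasurableSpace X) [mXa : MeasurableSpace X] [mYa : MeasurableSpace Y]
    (act : G → X → X) (μ : Measure X) (ν : Measure Y) (μy : Y → Measure X)
    (Γ : Set G) : Prop :=
  ∀ φ : X → ℂ, MemL2 m' μ φ → ∀ ε : ℝ, 0 < ε →
    ∃ ψ : X → ℂ, MemL2 m' μ ψ ∧ IsFKap act μ ν μy Γ ψ ∧
      eLpNorm (fun x => φ x - ψ x) 2 μ < ENNReal.ofReal ε

/-- `H` is invariant (a.e. with respect to `ρ`) for the diagonal `Γ`-action on `X × X`. -/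
def DiagInvariant [mXa : MeasurableSpace X] (act : G → X → X) (ρ : Measure (X × X)) (Γ : Set G)
    (H : X × X → ℂ) : Prop :=
  ∀ g ∈ Γ, (fun p : X × X => H (act g p.1, act g p.2)) =ᵐ[ρ] H

/-- The extension `π : 𝕏' → 𝕐` is jointly relatively weak-mixing for `Γ`:
every `Γ`-invariant `H ∈ L²(X×X, 𝒳'⊗𝒳', μ⊗_Yμ)` is a.e. a function on `𝕐`
via `π ×_Y π`. -/
def JointRelWM (m' : MeasurableSpace X) [mXa : MeasurableSpace X] [mYa : MeasurableSpace Y]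
    (act : G → X → X) (ν : Measure Y) (μy : Y → Measure X) (π : X → Y)
    (Γ : Set G) : Prop :=
  ∀ H : X × X → ℂ, Measurable[m'.prod m'] H → MemLp H 2 (relProd ν μy) →
    DiagInvariant act (relProd ν μy) Γ H →
    ∃ h : Y → ℂ, Measurable h ∧ H =ᵐ[relProd ν μy] fun p => h (π p.1)

/-- The extension of `𝕐` with σ-algebra `m'` on `X` is nontrivial:
`π⁻¹[𝒴] ≠ m'` (μ-mod 0). -/
def NontrivialExt (m' : MeasurableSpace X) [mXa : MeasurableSpace X] [mYa : MeasurableSpace Y]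
    (μ : Measure X) (π : X → Y) : Prop :=
  ∃ A : Set X, MeasurableSet[m'] A ∧
    ∀ B : Set Y, MeasurableSet B → μ (symmDiff A (π ⁻¹' B)) ≠ 0

/-- The extension `π : 𝕏' → 𝕐` is jointly relatively ergodic for `Γ`: every
`Γ`-invariant `f ∈ L^∞(X, 𝒳', μ)` is μ-a.e. a function on `𝕐`. -/
def JointRelErg (m' : MeasurableSpace X) [mXa : MeasurableSpace X] [mYa : MeasurableSpace Y]
    (act : G → X → X) (μ : Measure X) (π : X → Y) (Γ : Set G) : Prop :=
  ∀ f : X → ℂ, Measurable[m'] f → MemLp f ⊤ μ →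
    (∀ g ∈ Γ, (fun x => f (act g x)) =ᵐ[μ] f) →
    ∃ h : Y → ℂ, Measurable h ∧ f =ᵐ[μ] fun x => h (π x)

/-- `Γ` is an `R`-submodule of the `R`-module `G` (with scalar action `σ`):
a subgroup closed under scalar multiplication. -/
def IsSubmoduleSet [Group G] (σ : R → G → G) (Γ : Set G) : Prop :=
  (1 : G) ∈ Γ ∧ (∀ a ∈ Γ, ∀ b ∈ Γ, a * b ∈ Γ) ∧ (∀ a ∈ Γ, a⁻¹ ∈ Γ) ∧
    ∀ t : R, ∀ a ∈ Γ, σ t a ∈ Γ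

/-- `G` is a Noetherian `R`-module: the ascending chain condition on `R`-submodules. -/
def NoetherianModule [Group G] (σ : R → G → G) : Prop :=
  ∀ c : ℕ → Set G, (∀ n, IsSubmoduleSet σ (c n)) → (∀ n, c n ⊆ c (n + 1)) →
    ∃ N, ∀ n, N ≤ n → c n = c N

/-- The ring `R` is syndetic: for every `r ≠ 0` the set `rR` is syndetic in `R`,
i.e. `K + rR = R` for some compact `K`. -/
def SyndeticRing (R : Type*) [Ring R] [TopologicalSpace R] : Prop :=
  ∀ r : R, r ≠ 0 → ∃ K : Set R, IsCompact K ∧ ∀ x : R, ∃ k ∈ K, ∃ s : R, x = k + r * s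

/-- The extension `π : 𝕏' → 𝕐` is totally relatively weak-mixing for `Γ`:
for every `g ∈ Γ` with `g ≠ I`, every `⟨g⟩_R`-invariant `H ∈ L²(μ⊗_Yμ)` is a.e.
a function on `𝕐`. -/
def TotallyRelWM (m' : MeasurableSpace X) [mXa : MeasurableSpace X] [mYa : MeasurableSpace Y]
    [Group G] (σ : R → G → G) (act : G → X → X) (ν : Measure Y)
    (μy : Y → Measure X) (π : X → Y) (Γ : Set G) : Prop :=
  ∀ g ∈ Γ, g ≠ (1 : G) →
    JointRelWM m' act ν μy π (Set.range fun t : R => σ t g)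

/-- The extension `π : (X, m', μ, G) → 𝕐` is primitive. -/
def PrimitiveExt (m' : MeasurableSpace X) [mXa : MeasurableSpace X] [mYa : MeasurableSpace Y]
    [Group G] (σ : R → G → G) (act : G → X → X) (μ : Measure X) (ν : Measure Y)
    (μy : Y → Measure X) (π : X → Y) : Prop :=
  TotallyRelWM m' σ act ν μy π Set.univ ∨
  RelCompact m' act μ ν μy Set.univ ∨
  ∃ Grc Grw : Set G, IsSubmoduleSet σ Grc ∧ IsSubmoduleSet σ Grw ∧
    Grc ≠ ({1} : Set G) ∧ Grw ≠ ({1} : Set G) ∧ Grc ∩ Grw = ({1} : Set G) ∧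
    (∀ g : G, ∃ a ∈ Grc, ∃ b ∈ Grw, g = a * b) ∧
    RelCompact m' act μ ν μy Grc ∧ TotallyRelWM m' σ act ν μy π Grw

/-- Condition C1: the relative convolutions `H *_Y φ`, with `H` bounded `Γ`-invariant
in `L²(μ⊗_Yμ)` and `φ` bounded in `L²(X,𝒳',μ)`, span a dense subspace of `L²(X,𝒳',μ)`. -/
def C1 (m' : MeasurableSpace X) [mXa : MeasurableSpace X] [mYa : MeasurableSpace Y]
    (act : G → X → X) (μ : Measure X) (ν : Measure Y) (μy : Y → Measure X)
    (π : X → Y) (Γ : Set G) : Prop :=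
  ∀ f : X → ℂ, MemL2 m' μ f → ∀ ε : ℝ, 0 < ε →
    ∃ (k : ℕ) (c : Fin k → ℂ) (H : Fin k → X × X → ℂ) (φ : Fin k → X → ℂ),
      (∀ i, Measurable[m'.prod m'] (H i) ∧ MemLp (H i) 2 (relProd ν μy) ∧
        BddAE (relProd ν μy) (H i) ∧ DiagInvariant act (relProd ν μy) Γ (H i)) ∧
      (∀ i, MemL2 m' μ (φ i) ∧ BddAE μ (φ i)) ∧
      eLpNorm (fun x => f x - ∑ i, c i * relConv μy π (H i) (φ i) x) 2 μ
        < ENNReal.ofReal ε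

/-- Condition C2: the FK a.p. (for `Γ`) functions are dense in `L²(X,𝒳',μ)`. -/
def C2 (m' : MeasurableSpace X) [mXa : MeasurableSpace X] [mYa : MeasurableSpace Y]
    (act : G → X → X) (μ : Measure X) (ν : Measure Y) (μy : Y → Measure X)
    (Γ : Set G) : Prop :=
  RelCompact m' act μ ν μy Γ

/-- Condition C3: every `φ ∈ L²(X,𝒳',μ)` admits, for each `δ > 0`, a set `B ∈ 𝒴` with
`ν(B) > 1 − δ` such that the modification `φ_B = 1_{π⁻¹[B]}·φ` is FK a.p. for `Γ`. -/
def C3 (m' : MeasurableSpace X) [mXa : MeasurableSpace X] [mYa : MeasurableSpace Y]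
    (act : G → X → X) (μ : Measure X) (ν : Measure Y) (μy : Y → Measure X)
    (π : X → Y) (Γ : Set G) : Prop :=
  ∀ φ : X → ℂ, MemL2 m' μ φ → ∀ δ : ℝ, 0 < δ →
    ∃ B : Set Y, MeasurableSet B ∧ 1 - δ < (ν B).toReal ∧
      IsFKap act μ ν μy Γ ((π ⁻¹' B).indicator φ)

/-- Condition C4: every `φ ∈ L²(X,𝒳',μ)` is FK ν-almost almost-periodic for `Γ`. -/
def C4 (m' : MeasurableSpace X) [mXa : MeasurableSpace X] [mYa : MeasurableSpace Y]
    (act : G → X → X) (μ : Measure X) (ν : Measure Y) (μy : Y → Measure X)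
    (Γ : Set G) : Prop :=
  ∀ φ : X → ℂ, MemL2 m' μ φ → IsFKaap act μ ν μy Γ φ

/-- A measure on `G` carried by `Γ` and left-invariant under elements of `Γ`
(a left Haar measure of `Γ`). -/
def LeftInvariantOn [Group G] [MeasurableSpace G] (mΓ : Measure G) (Γ : Set G) : Prop :=
  mΓ Γᶜ = 0 ∧
    ∀ g ∈ Γ, ∀ A : Set G, MeasurableSet A → mΓ ((fun h => g * h) ⁻¹' A) = mΓ A

/-- A weak Følner sequence in `Γ` for the measure `mΓ`. -/
def IsWeakFolner [Group G] [TopologicalSpace G] [MeasurableSpace G]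
    (mΓ : Measure G) (Γ : Set G) (F : ℕ → Set G) : Prop :=
  (∀ n, IsCompact (F n)) ∧ (∀ n, F n ⊆ Γ) ∧ (∀ n, 0 < mΓ (F n)) ∧ (∀ n, mΓ (F n) < ⊤) ∧
    ∀ g ∈ Γ, Tendsto (fun n => mΓ (symmDiff ((fun h => g * h) '' F n) (F n)) / mΓ (F n))
      atTop (nhds 0)

/-- The Følner average `(1/m_Γ(F_n)) ∫_{F_n} U_g (φ ⊗ φ̄) dg` as a function on `X × X`. -/
def FolnerAvg [MeasurableSpace G] (act : G → X → X) (mΓ : Measure G) (F : ℕ → Set G)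
    (φ : X → ℂ) (n : ℕ) : X × X → ℂ :=
  fun p => (mΓ (F n)).toReal⁻¹ •
    ∫ g in F n, φ (act g p.1) * (starRingEnd ℂ) (φ (act g p.2)) ∂mΓ

/-- Condition C5: for any weak Følner sequence in `Γ` and any `φ ∈ L²(X,𝒳',μ)`,
the weak `L²(μ⊗_Yμ)`-limit `P(φ⊗φ̄)` of the Følner averages vanishes iff `φ = 0`. -/
def C5 (m' : MeasurableSpace X) [mXa : MeasurableSpace X] [mYa : MeasurableSpace Y]
    [Group G] [TopologicalSpace G] [MeasurableSpace G]
    (act : G → X → X) (μ : Measure X) (ν : Measure Y) (μy : Y → Measure X)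
    (Γ : Set G) : Prop :=
  ∀ mΓ : Measure G, LeftInvariantOn mΓ Γ →
  ∀ F : ℕ → Set G, IsWeakFolner mΓ Γ F →
  ∀ φ : X → ℂ, MemL2 m' μ φ →
  ∀ P : X × X → ℂ, MemLp P 2 (relProd ν μy) →
    (∀ ψ : X × X → ℂ, MemLp ψ 2 (relProd ν μy) →
      Tendsto
        (fun n => ∫ p, FolnerAvg act mΓ F φ n p * (starRingEnd ℂ) (ψ p) ∂(relProd ν μy))
        atTop (nhds (∫ p, P p * (starRingEnd ℂ) (ψ p) ∂(relProd ν μy)))) →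
    (P =ᵐ[relProd ν μy] 0 ↔ φ =ᵐ[μ] 0)

/-- Condition C6: as C5 but with the limit taken in the `L²(μ⊗_Yμ)`-norm. -/
def C6 (m' : MeasurableSpace X) [mXa : MeasurableSpace X] [mYa : MeasurableSpace Y]
    [Group G] [TopologicalSpace G] [MeasurableSpace G]
    (act : G → X → X) (μ : Measure X) (ν : Measure Y) (μy : Y → Measure X)
    (Γ : Set G) : Prop :=
  ∀ mΓ : Measure G, LeftInvariantOn mΓ Γ →
  ∀ F : ℕ → Set G, IsWeakFolner mΓ Γ F →
  ∀ φ : X → ℂ, MemL2 m' μ φ →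
  ∀ P : X × X → ℂ, MemLp P 2 (relProd ν μy) →
    Tendsto (fun n => eLpNorm (fun p => FolnerAvg act mΓ F φ n p - P p) 2 (relProd ν μy))
      atTop (nhds 0) →
    (P =ᵐ[relProd ν μy] 0 ↔ φ =ᵐ[μ] 0)

/-- Disintegration of `μ` over a factor given by a sub-σ-algebra `m₁` of the ambient
σ-algebra, via conditional measures `μc x`. -/
structure CondDisint (m₁ : MeasurableSpace X) [mXa : MeasurableSpace X] (μ : Measure X)
    (μc : X → Measure X) : Prop where
  prob : ∀ x, IsProbabilityMeasure (μc x)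
  meas : ∀ B : Set X, MeasurableSet B → Measurable[m₁] fun x => μc x B
  eq : ∀ B : Set X, MeasurableSet B → ∀ A : Set X, MeasurableSet[m₁] A →
    μ (B ∩ A) = ∫⁻ x in A, μc x B ∂μ

/-- The relative product measure over a factor via conditional measures. -/
def relProdC [mXa : MeasurableSpace X] (μ : Measure X) (μc : X → Measure X) : Measure (X × X) :=
  μ.bind fun x => (μc x).prod (μc x)

/-- FK almost periodicity, fiber measures given by conditional measures. -/
def IsFKapC [mXa : MeasurableSpace X] (act : G → X → X) (μ : Measure X) (μc : X → Measure X)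
    (Γ : Set G) (φ : X → ℂ) : Prop :=
  ∀ ε : ℝ, 0 < ε → ∃ (k : ℕ) (ψ : Fin k → X → ℂ),
    (∀ j, MemLp (ψ j) 2 μ) ∧
    ∀ g ∈ Γ, ∀ᵐ x ∂μ,
      ∃ j, eLpNorm (fun z => φ (act g z) - ψ j z) 2 (μc x) < ENNReal.ofReal ε

/-- FK almost almost-periodicity, fiber measures given by conditional measures. -/
def IsFKaapC [mXa : MeasurableSpace X] (act : G → X → X) (μ : Measure X) (μc : X → Measure X)
    (Γ : Set G) (φ : X → ℂ) : Prop :=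
  ∀ δ ε : ℝ, 0 < δ → 0 < ε → ∃ (k : ℕ) (ψ : Fin k → X → ℂ),
    (∀ j, MemLp (ψ j) 2 μ) ∧
    ∀ g ∈ Γ,
      μ {x | ¬ ∃ j, eLpNorm (fun z => φ (act g z) - ψ j z) 2 (μc x) < ENNReal.ofReal ε}
        < ENNReal.ofReal δ

/-- Relative compactness of the extension `(X,m₂,μ,G) → (X,m₁,μ,G)` for `Γ`,
with conditional measures `μc` over the base `m₁`. -/
def RelCompactC (m₂ : MeasurableSpace X) [mXa : MeasurableSpace X]
    (act : G → X → X) (μ : Measure X) (μc : X → Measure X) (Γ : Set G) : Prop :=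
  ∀ φ : X → ℂ, MemL2 m₂ μ φ → ∀ ε : ℝ, 0 < ε →
    ∃ ψ : X → ℂ, MemL2 m₂ μ ψ ∧ IsFKapC act μ μc Γ ψ ∧
      eLpNorm (fun x => φ x - ψ x) 2 μ < ENNReal.ofReal ε

/-- Relative C4-compactness: every function of `L²(X,m₂,μ)` is FK a.a.p. for `Γ`
relative to the base factor (whose conditional measures are `μc`). -/
def RelC4CompactC (m₂ : MeasurableSpace X) [mXa : MeasurableSpace X]
    (act : G → X → X) (μ : Measure X) (μc : X → Measure X) (Γ : Set G) : Prop :=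
  ∀ φ : X → ℂ, MemL2 m₂ μ φ → IsFKaapC act μ μc Γ φ

/-- Joint relative weak-mixing of `(X,m₂,μ,G) → (X,m₁,μ,G)` for `Γ`. -/
def JointRelWMC (m₂ m₁ : MeasurableSpace X) [mXa : MeasurableSpace X]
    (act : G → X → X) (μ : Measure X) (μc : X → Measure X) (Γ : Set G) : Prop :=
  ∀ H : X × X → ℂ, Measurable[m₂.prod m₂] H → MemLp H 2 (relProdC μ μc) →
    DiagInvariant act (relProdC μ μc) Γ H →
    ∃ h : X → ℂ, Measurable[m₁] h ∧ H =ᵐ[relProdC μ μc] fun p => h p.1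

/-- Total relative weak-mixing of `(X,m₂,μ,G) → (X,m₁,μ,G)` for `Γ`. -/
def TotallyRelWMC (m₂ m₁ : MeasurableSpace X) [mXa : MeasurableSpace X] [Group G]
    (σ : R → G → G) (act : G → X → X) (μ : Measure X)
    (μc : X → Measure X) (Γ : Set G) : Prop :=
  ∀ g ∈ Γ, g ≠ (1 : G) →
    JointRelWMC m₂ m₁ act μ μc (Set.range fun t : R => σ t g)

/-- Primitivity of the extension `(X,m₂,μ,G) → (X,m₁,μ,G)`. -/
def PrimitiveExtC (m₂ m₁ : MeasurableSpace X) [mXa : MeasurableSpace X] [Group G]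
    (σ : R → G → G) (act : G → X → X) (μ : Measure X)
    (μc : X → Measure X) : Prop :=
  TotallyRelWMC m₂ m₁ σ act μ μc Set.univ ∨
  RelCompactC m₂ act μ μc Set.univ ∨
  ∃ Grc Grw : Set G, IsSubmoduleSet σ Grc ∧ IsSubmoduleSet σ Grw ∧
    Grc ≠ ({1} : Set G) ∧ Grw ≠ ({1} : Set G) ∧ Grc ∩ Grw = ({1} : Set G) ∧
    (∀ g : G, ∃ a ∈ Grc, ∃ b ∈ Grw, g = a * b) ∧
    RelCompactC m₂ act μ μc Grc ∧ TotallyRelWMC m₂ m₁ σ act μ μc Grw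

/-- Nontriviality of the extension given by the pair of σ-algebras `m₂ ⊇ m₁` (μ-mod 0). -/
def NontrivialPair (m₂ m₁ : MeasurableSpace X) [mXa : MeasurableSpace X]
    (μ : Measure X) : Prop :=
  ∃ A : Set X, MeasurableSet[m₂] A ∧
    ∀ B : Set X, MeasurableSet[m₁] B → μ (symmDiff A B) ≠ 0

/-- Equality of two σ-algebras μ-mod 0. -/
def EqMod0 (m₁ m₂ : MeasurableSpace X) [mXa : MeasurableSpace X] (μ : Measure X) : Prop :=
  (∀ A : Set X, MeasurableSet[m₁] A → ∃ B, MeasurableSet[m₂] B ∧ μ (symmDiff A B) = 0) ∧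
  (∀ A : Set X, MeasurableSet[m₂] A → ∃ B, MeasurableSet[m₁] B ∧ μ (symmDiff A B) = 0)

end FE

/-!
The Koopman representation `g ↦ U_g φ` of a measurable measure-preserving action of a locally
compact second countable group on a space with separable `L²` is strongly continuous. So for
`g ∈ G' ⊆ closure Γ` there are `γ ∈ Γ` with `‖U_g φ - U_γ φ‖₂` arbitrarily small, and by
Chebyshev's inequality over the disintegration, `‖U_g φ - U_γ φ‖_{2,y}` is then small outside a
set of `y` of arbitrarily small measure. The triangle inequality in each fiber transfers the
approximation by the `ψ_i` from `γ` to `g`: the radius grows by any prescribed `b > 0`, while the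
exceptional measure does not grow at all.
-/

open scoped NNReal

namespace FE

section Disintegration

variable {X Y E : Type*} [MeasurableSpace X] [MeasurableSpace Y] [NormedAddCommGroup E]
  {μ : Measure X} {ν : Measure Y} {π : X → Y} {μy : Y → Measure X}

theorem Disintegration.measurable (hdis : Disintegration μ ν π μy) : Measurable μy :=
  Measure.measurable_of_measurable_coe _ hdis.meas

theorem Disintegration.eq_bind (hdis : Disintegration μ ν π μy) : μ = ν.bind μy := by
  ext s hs
  rw [Measure.bind_apply hs hdis.measurable.aemeasurable]
  simpa using hdis.eq s hs univ MeasurableSet.univ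

theorem Disintegration.ae_aestronglyMeasurable (hdis : Disintegration μ ν π μy) {f : X → E}
    (hf : AEStronglyMeasurable f μ) : ∀ᵐ y ∂ν, AEStronglyMeasurable f (μy y) := by
  have hmk : ∀ᵐ x ∂ν.bind μy, f x = hf.mk f x := hdis.eq_bind ▸ hf.ae_eq_mk
  filter_upwards [Measure.ae_ae_of_ae_bind hdis.measurable.aemeasurable hmk] with y hy
  exact ⟨hf.mk f, hf.stronglyMeasurable_mk, hy⟩

theorem eLpNorm_two_sq_eq_lintegral (f : X → E) (μ : Measure X) :
    eLpNorm f 2 μ ^ 2 = ∫⁻ x, ‖f x‖ₑ ^ 2 ∂μ := by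
  simpa using eLpNorm_nnreal_pow_eq_lintegral (f := f) (μ := μ) (p := 2) two_ne_zero

theorem Disintegration.measurable_eLpNorm_sq (hdis : Disintegration μ ν π μy) {f : X → E}
    (hf : StronglyMeasurable f) : Measurable fun y => eLpNorm f 2 (μy y) ^ 2 := by
  simp only [eLpNorm_two_sq_eq_lintegral]
  exact (Measure.measurable_lintegral (hf.enorm.pow_const 2)).comp hdis.measurable

theorem Disintegration.lintegral_eLpNorm_sq (hdis : Disintegration μ ν π μy) {f : X → E}
    (hf : StronglyMeasurable f) : ∫⁻ y, eLpNorm f 2 (μy y) ^ 2 ∂ν = eLpNorm f 2 μ ^ 2 := by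
  simp only [eLpNorm_two_sq_eq_lintegral]
  rw [hdis.eq_bind, Measure.lintegral_bind hdis.measurable.aemeasurable
    (hf.enorm.pow_const 2).aemeasurable]

theorem Disintegration.meas_le_eLpNorm_le (hdis : Disintegration μ ν π μy) {f : X → E}
    (hf : StronglyMeasurable f) {b : ℝ≥0∞} (hb : b ≠ 0) (hb' : b ≠ ∞) :
    ν {y | b ≤ eLpNorm f 2 (μy y)} ≤ eLpNorm f 2 μ ^ 2 / b ^ 2 := by
  calc ν {y | b ≤ eLpNorm f 2 (μy y)}
      ≤ ν {y | b ^ 2 ≤ eLpNorm f 2 (μy y) ^ 2} := measure_mono fun y hy => pow_le_pow_left' hy 2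
    _ ≤ (∫⁻ y, eLpNorm f 2 (μy y) ^ 2 ∂ν) / b ^ 2 :=
      meas_ge_le_lintegral_div (hdis.measurable_eLpNorm_sq hf).aemeasurable
        (pow_ne_zero 2 hb) (ENNReal.pow_ne_top hb')
    _ = eLpNorm f 2 μ ^ 2 / b ^ 2 := by rw [hdis.lintegral_eLpNorm_sq hf]

theorem Disintegration.meas_not_exists_eLpNorm_sub_lt_add_le (hdis : Disintegration μ ν π μy)
    {ι : Type*} [Countable ι] {ψ : ι → X → E} (hψ : ∀ i, AEStronglyMeasurable (ψ i) μ)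
    {f f' : X → E} (hf : StronglyMeasurable f) (hf' : StronglyMeasurable f') (a b : ℝ≥0∞) :
    ν {y | ¬ ∃ i, eLpNorm (fun x => f x - ψ i x) 2 (μy y) < a + b} ≤
      ν {y | ¬ ∃ i, eLpNorm (fun x => f' x - ψ i x) 2 (μy y) < a} +
        ν {y | b ≤ eLpNorm (fun x => f x - f' x) 2 (μy y)} := by
  refine (measure_mono_ae ?_).trans (measure_union_le _ _)
  have hψy : ∀ᵐ y ∂ν, ∀ i, AEStronglyMeasurable (ψ i) (μy y) :=
    ae_all_iff.2 fun i => hdis.ae_aestronglyMeasurable (hψ i)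
  filter_upwards [hψy] with y hψy (hy : ¬ ∃ i, _ < a + b)
  by_contra hcon
  obtain ⟨hA, hB⟩ := not_or.1 hcon
  obtain ⟨i, hi⟩ : ∃ i, eLpNorm (fun x => f' x - ψ i x) 2 (μy y) < a := not_not.1 hA
  refine hy ⟨i, ?_⟩
  calc eLpNorm (fun x => f x - ψ i x) 2 (μy y)
      = eLpNorm ((fun x => f' x - ψ i x) + fun x => f x - f' x) 2 (μy y) := by
        congr 1; ext x; simp
    _ ≤ eLpNorm (fun x => f' x - ψ i x) 2 (μy y) + eLpNorm (fun x => f x - f' x) 2 (μy y) :=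
        eLpNorm_add_le (hf'.aestronglyMeasurable.sub (hψy i))
          (hf.aestronglyMeasurable.sub hf'.aestronglyMeasurable) one_le_two
    _ < a + b := ENNReal.add_lt_add hi (not_le.1 hB)

end Disintegration

section Translation

variable {G X E : Type*} [MeasurableSpace X] [NormedAddCommGroup E]
  {μ : Measure X} {act : G → X → X} {φ : X → E}

def l2Displacement (act : G → X → X) (μ : Measure X) (φ : X → E) (h : G) : ℝ≥0∞ :=
  eLpNorm (fun x => φ (act h x) - φ x) 2 μ

theorem eLpNorm_comp_act_sub_comp_act [Group G]
    (hactmul : ∀ g h x, act (g * h) x = act g (act h x))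
    (hactμ : ∀ g, MeasurePreserving (act g) μ μ) (hφ : AEStronglyMeasurable φ μ) (h t : G) :
    eLpNorm (fun x => φ (act h x) - φ (act t x)) 2 μ = l2Displacement act μ φ (h * t⁻¹) := by
  have hcomp : (fun x => φ (act h x) - φ (act t x))
      = (fun x => φ (act (h * t⁻¹) x) - φ x) ∘ act t := by
    ext x
    simp [← hactmul]
  rw [hcomp]
  exact eLpNorm_comp_measurePreserving ((hφ.comp_measurePreserving (hactμ _)).sub hφ) (hactμ t)

theorem l2Displacement_inv [Group G]
    (hactmul : ∀ g h x, act (g * h) x = act g (act h x))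
    (hactμ : ∀ g, MeasurePreserving (act g) μ μ) (hφ : AEStronglyMeasurable φ μ) (h : G) :
    l2Displacement act μ φ h⁻¹ = l2Displacement act μ φ h := by
  calc l2Displacement act μ φ h⁻¹
      = eLpNorm (fun x => φ (act 1 x) - φ (act h x)) 2 μ := by
        rw [eLpNorm_comp_act_sub_comp_act hactmul hactμ hφ, one_mul]
    _ = eLpNorm (fun x => φ (act h x) - φ (act 1 x)) 2 μ := by
        rw [← eLpNorm_neg]; congr 1; ext x; simp
    _ = l2Displacement act μ φ h := by
        rw [eLpNorm_comp_act_sub_comp_act hactmul hactμ hφ, inv_one, mul_one]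

theorem l2Displacement_mul_le [Group G]
    (hactmul : ∀ g h x, act (g * h) x = act g (act h x))
    (hactμ : ∀ g, MeasurePreserving (act g) μ μ) (hφ : AEStronglyMeasurable φ μ) (a b : G) :
    l2Displacement act μ φ (a * b) ≤ l2Displacement act μ φ a + l2Displacement act μ φ b := by
  have hU : ∀ h, AEStronglyMeasurable (fun x => φ (act h x)) μ := fun h =>
    hφ.comp_measurePreserving (hactμ h)
  calc l2Displacement act μ φ (a * b)
      = eLpNorm ((fun x => φ (act (a * b) x) - φ (act b x)) + fun x => φ (act b x) - φ x) 2 μ := by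
        rw [l2Displacement]; congr 1; ext x; simp
    _ ≤ eLpNorm (fun x => φ (act (a * b) x) - φ (act b x)) 2 μ + l2Displacement act μ φ b :=
        eLpNorm_add_le ((hU _).sub (hU _)) ((hU _).sub hφ) one_le_two
    _ = l2Displacement act μ φ a + l2Displacement act μ φ b := by
        rw [eLpNorm_comp_act_sub_comp_act hactmul hactμ hφ, mul_inv_cancel_right]

theorem measurable_l2Displacement [MeasurableSpace G] [SFinite μ]
    (hact : Measurable fun p : G × X => act p.1 p.2) (hφ : StronglyMeasurable φ) :
    Measurable (l2Displacement act μ φ) := by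
  have hsq : Measurable fun h => l2Displacement act μ φ h ^ 2 := by
    simp only [l2Displacement, eLpNorm_two_sq_eq_lintegral]
    exact (((hφ.comp_measurable hact).sub (hφ.comp_measurable measurable_snd)).enorm.pow_const
      2).lintegral_prod_right'
  have hsqrt : ∀ h, l2Displacement act μ φ h = (l2Displacement act μ φ h ^ 2) ^ (2⁻¹ : ℝ) := by
    intro h
    rw [← ENNReal.rpow_natCast, ← ENNReal.rpow_mul]
    norm_num
  rw [funext hsqrt]
  exact hsq.pow_const _

theorem exists_countable_forall_exists_l2Displacement_lt [Group G] [IsSeparable μ]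
    [TopologicalSpace.SeparableSpace E]
    (hactmul : ∀ g h x, act (g * h) x = act g (act h x))
    (hactμ : ∀ g, MeasurePreserving (act g) μ μ) (hφ : MemLp φ 2 μ) {c : ℝ≥0∞} (hc : c ≠ 0) :
    ∃ T : Set G, T.Countable ∧ ∀ h, ∃ t ∈ T, l2Displacement act μ φ (h * t⁻¹) < c := by
  have : Fact ((2 : ℝ≥0∞) ≠ ∞) := ⟨ENNReal.ofNat_ne_top⟩
  let V : G → Lp E 2 μ := fun h => (hφ.comp_measurePreserving (hactμ h)).toLp
  have hV : ∀ h t, edist (V h) (V t) = l2Displacement act μ φ (h * t⁻¹) := by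
    intro h t
    rw [Lp.edist_def, ← eLpNorm_comp_act_sub_comp_act hactmul hactμ hφ.1]
    refine eLpNorm_congr_ae ?_
    filter_upwards [MemLp.coeFn_toLp (hφ.comp_measurePreserving (hactμ h)),
      MemLp.coeFn_toLp (hφ.comp_measurePreserving (hactμ t))] with x hxh hxt
    simp only [Pi.sub_apply, hxh, hxt, Function.comp_apply, V]
  obtain ⟨D, hDV, hDc, hVD⟩ :=
    (TopologicalSpace.IsSeparable.of_separableSpace (range V)).exists_countable_dense_subset
  refine ⟨Function.invFun V '' D, hDc.image _, fun h => ?_⟩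
  obtain ⟨q, hqD, hq⟩ := EMetric.mem_closure_iff.1 (hVD (mem_range_self h)) c (pos_iff_ne_zero.2 hc)
  refine ⟨Function.invFun V q, mem_image_of_mem _ hqD, ?_⟩
  rwa [← hV, Function.invFun_eq (hDV hqD)]

end Translation

section Continuity

variable {G X E : Type*} [Group G] [TopologicalSpace G] [IsTopologicalGroup G]
  [LocallyCompactSpace G] [SecondCountableTopology G] [MeasurableSpace G] [BorelSpace G]
  [MeasurableSpace X] [NormedAddCommGroup E] [TopologicalSpace.SeparableSpace E]
  {μ : Measure X} [SFinite μ] [IsSeparable μ] {act : G → X → X} {φ : X → E}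

/-- By separability of `L²`, countably many right translates of
`{h | l2Displacement act μ φ h < c / 2}` cover `G`, so this set has positive Haar measure, and by
Steinhaus' theorem its quotient set, on which the displacement is `< c`, is a neighbourhood
of `1`. -/
theorem tendsto_l2Displacement_nhds_one
    (hactmul : ∀ g h x, act (g * h) x = act g (act h x))
    (hact : Measurable fun p : G × X => act p.1 p.2)
    (hactμ : ∀ g, MeasurePreserving (act g) μ μ) (hφ : StronglyMeasurable φ)
    (hφ2 : MemLp φ 2 μ) : Tendsto (l2Displacement act μ φ) (𝓝 1) (𝓝 0) := by
  rw [ENNReal.tendsto_nhds_zero]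
  intro c hc
  set S := {h | l2Displacement act μ φ h < c / 2}
  have hS : MeasurableSet S := measurable_l2Displacement hact hφ measurableSet_Iio
  obtain ⟨T, hTc, hT⟩ := exists_countable_forall_exists_l2Displacement_lt hactmul hactμ hφ2
    (ENNReal.half_pos hc.ne').ne'
  have hcover : univ ⊆ ⋃ t ∈ T, (fun h => h * t⁻¹) ⁻¹' S := fun h _ => by
    obtain ⟨t, ht, hlt⟩ := hT h
    exact mem_biUnion ht hlt
  have hSpos : 0 < Measure.haar S := by
    refine pos_iff_ne_zero.2 fun hS0 =>
      isOpen_univ.measure_ne_zero (Measure.haar : Measure G) univ_nonempty ?_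
    refine measure_mono_null hcover ?_
    exact (measure_biUnion_null_iff hTc).2 fun t _ => (measure_mul_right_null _ t⁻¹).2 hS0
  filter_upwards [Measure.div_mem_nhds_one_of_haar_pos Measure.haar S hS hSpos]
  rintro _ ⟨a, ha, b, hb, rfl⟩
  calc l2Displacement act μ φ (a / b)
      ≤ l2Displacement act μ φ a + l2Displacement act μ φ b⁻¹ := by
        rw [div_eq_mul_inv]; exact l2Displacement_mul_le hactmul hactμ hφ.aestronglyMeasurable _ _
    _ ≤ c / 2 + c / 2 := by
        rw [l2Displacement_inv hactmul hactμ hφ.aestronglyMeasurable]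
        exact add_le_add ha.le hb.le
    _ = c := ENNReal.add_halves c

theorem exists_mem_eLpNorm_comp_act_sub_lt_of_mem_closure
    (hactmul : ∀ g h x, act (g * h) x = act g (act h x))
    (hact : Measurable fun p : G × X => act p.1 p.2)
    (hactμ : ∀ g, MeasurePreserving (act g) μ μ) (hφ : StronglyMeasurable φ)
    (hφ2 : MemLp φ 2 μ) {Γ : Set G} {g : G} (hg : g ∈ closure Γ) {c : ℝ≥0∞} (hc : c ≠ 0) :
    ∃ γ ∈ Γ, eLpNorm (fun x => φ (act g x) - φ (act γ x)) 2 μ < c := by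
  have hnear : ∀ᶠ h in 𝓝 g, l2Displacement act μ φ (g * h⁻¹) < c := by
    have hcont : Tendsto (fun h => g * h⁻¹) (𝓝 g) (𝓝 1) :=
      ((continuous_const_mul g).comp continuous_inv).tendsto' g 1 (mul_inv_cancel g)
    exact ((tendsto_l2Displacement_nhds_one hactmul hact hactμ hφ hφ2).comp hcont).eventually
      (gt_mem_nhds (pos_iff_ne_zero.2 hc))
  obtain ⟨γ, hγΓ, hγ⟩ := ((mem_closure_iff_frequently.1 hg).and_eventually hnear).exists
  exact ⟨γ, hγΓ, by rwa [eLpNorm_comp_act_sub_comp_act hactmul hactμ hφ.aestronglyMeasurable]⟩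

end Continuity

theorem IsFKap.mono {G X Y : Type*} [MeasurableSpace X] [MeasurableSpace Y] {act : G → X → X}
    {μ : Measure X} {ν : Measure Y} {μy : Y → Measure X} {Γ Γ' : Set G} {φ : X → ℂ}
    (h : IsFKap act μ ν μy Γ' φ) (hΓ : Γ ⊆ Γ') : IsFKap act μ ν μy Γ φ := fun ε hε =>
  let ⟨k, ψ, hψ, hψΓ⟩ := h ε hε
  ⟨k, ψ, hψ, fun g hg => hψΓ g (hΓ hg)⟩

section Approximation

variable {G X Y : Type*} [Group G] [TopologicalSpace G] [IsTopologicalGroup G]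
  [LocallyCompactSpace G] [SecondCountableTopology G] [MeasurableSpace G] [BorelSpace G]
  [MeasurableSpace X] [MeasurableSpace Y] {μ : Measure X} [SFinite μ] [IsSeparable μ]
  {ν : Measure Y} {π : X → Y} {μy : Y → Measure X} {act : G → X → X}

theorem Disintegration.meas_not_exists_eLpNorm_comp_act_sub_lt_add_le_of_mem_closure
    {E : Type*} [NormedAddCommGroup E] [TopologicalSpace.SeparableSpace E]
    (hdis : Disintegration μ ν π μy) (hactmul : ∀ g h x, act (g * h) x = act g (act h x))
    (hact : Measurable fun p : G × X => act p.1 p.2)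
    (hactμ : ∀ g, MeasurePreserving (act g) μ μ) {φ : X → E} (hφ : StronglyMeasurable φ)
    (hφ2 : MemLp φ 2 μ) {ι : Type*} [Countable ι] {ψ : ι → X → E}
    (hψ : ∀ i, AEStronglyMeasurable (ψ i) μ) {Γ : Set G} {a b d : ℝ≥0∞} (hb : b ≠ 0)
    (hb' : b ≠ ∞)
    (hΓ : ∀ γ ∈ Γ, ν {y | ¬ ∃ i, eLpNorm (fun x => φ (act γ x) - ψ i x) 2 (μy y) < a} ≤ d)
    {g : G} (hg : g ∈ closure Γ) :
    ν {y | ¬ ∃ i, eLpNorm (fun x => φ (act g x) - ψ i x) 2 (μy y) < a + b} ≤ d := by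
  refine ENNReal.le_of_forall_pos_le_add fun η hη _ => ?_
  have hc : b * (NNReal.sqrt η : ℝ≥0∞) ≠ 0 := mul_ne_zero hb (by simpa using hη.ne')
  obtain ⟨γ, hγΓ, hγ⟩ :=
    exists_mem_eLpNorm_comp_act_sub_lt_of_mem_closure hactmul hact hactμ hφ hφ2 hg hc
  have hU : ∀ h, StronglyMeasurable fun x => φ (act h x) := fun h =>
    hφ.comp_measurable (hact.comp measurable_prodMk_left)
  have hfiber : ν {y | b ≤ eLpNorm (fun x => φ (act g x) - φ (act γ x)) 2 (μy y)} ≤ η := by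
    refine (hdis.meas_le_eLpNorm_le ((hU g).sub (hU γ)) hb hb').trans
      (ENNReal.div_le_of_le_mul' ?_)
    calc eLpNorm (fun x => φ (act g x) - φ (act γ x)) 2 μ ^ 2
        ≤ (b * (NNReal.sqrt η : ℝ≥0∞)) ^ 2 := pow_le_pow_left' hγ.le 2
      _ = b ^ 2 * η := by rw [mul_pow, ← ENNReal.coe_pow, NNReal.sq_sqrt]
  calc ν {y | ¬ ∃ i, eLpNorm (fun x => φ (act g x) - ψ i x) 2 (μy y) < a + b}
      ≤ ν {y | ¬ ∃ i, eLpNorm (fun x => φ (act γ x) - ψ i x) 2 (μy y) < a} +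
          ν {y | b ≤ eLpNorm (fun x => φ (act g x) - φ (act γ x)) 2 (μy y)} :=
        hdis.meas_not_exists_eLpNorm_sub_lt_add_le hψ (hU g) (hU γ) a b
    _ ≤ d + η := add_le_add (hΓ γ hγΓ) hfiber

theorem IsFKap.of_subset_closure (hdis : Disintegration μ ν π μy)
    (hactmul : ∀ g h x, act (g * h) x = act g (act h x))
    (hact : Measurable fun p : G × X => act p.1 p.2)
    (hactμ : ∀ g, MeasurePreserving (act g) μ μ) {φ : X → ℂ} (hφ : StronglyMeasurable φ)
    (hφ2 : MemLp φ 2 μ) {Γ Γ' : Set G} (h : IsFKap act μ ν μy Γ φ) (hΓ' : Γ' ⊆ closure Γ) :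
    IsFKap act μ ν μy Γ' φ := by
  intro ε hε
  obtain ⟨k, ψ, hψ, hψΓ⟩ := h (ε / 2) (half_pos hε)
  refine ⟨k, ψ, hψ, fun g hg => ae_iff.2 (nonpos_iff_eq_zero.1 ?_)⟩
  have := hdis.meas_not_exists_eLpNorm_comp_act_sub_lt_add_le_of_mem_closure hactmul hact hactμ
    hφ hφ2 (fun i => (hψ i).1) (ENNReal.ofReal_pos.2 (half_pos hε)).ne' ENNReal.ofReal_ne_top
    (d := 0) (fun γ hγ => (ae_iff.1 (hψΓ γ hγ)).le) (hΓ' hg)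
  rwa [← ENNReal.ofReal_add (half_pos hε).le (half_pos hε).le, add_halves] at this

end Approximation

end FE

theorem lemma_1_4_general
    {G X Y : Type*}
    [CommGroup G] [TopologicalSpace G] [IsTopologicalGroup G]
    [LocallyCompactSpace G] [SecondCountableTopology G]
    [MeasurableSpace G] [BorelSpace G]
    (m' : MeasurableSpace X)
    [mX : MeasurableSpace X] [StandardBorelSpace X]
    [mY : MeasurableSpace Y]
    (μ : Measure X) [IsProbabilityMeasure μ]
    (ν : Measure Y)
    (act : G → X → X)
    (hactmul : ∀ g h x, act (g * h) x = act g (act h x))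
    (hactMeas : Measurable fun p : G × X => act p.1 p.2)
    (hactμ : ∀ g, MeasurePreserving (act g) μ μ)
    (π : X → Y)
    (hm'le : m' ≤ mX)
    (μy : Y → Measure X) (hdis : FE.Disintegration μ ν π μy)
    (G' : Set G)
    (Γ : Set G) (hΓsub : Γ ⊆ G') (hΓdense : G' ⊆ closure Γ) :
    (∀ δ ε : ℝ, 0 ≤ δ → 0 < ε →
      ∀ φ : X → ℂ, FE.MemL2 m' μ φ →
      ∀ (k : ℕ) (ψ : Fin k → X → ℂ), (∀ i, MemLp (ψ i) 2 μ) →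
      (∀ γ ∈ Γ,
        ν {y | ¬ ∃ i, eLpNorm (fun x => φ (act γ x) - ψ i x) 2 (μy y)
          < ENNReal.ofReal ε} ≤ ENNReal.ofReal δ) →
      ∀ g ∈ G',
        ν {y | ¬ ∃ i, eLpNorm (fun x => φ (act g x) - ψ i x) 2 (μy y)
          < ENNReal.ofReal (4 * ε)} ≤ ENNReal.ofReal (4 * δ)) ∧
    {φ : X → ℂ | FE.MemL2 m' μ φ ∧ FE.IsFKap act μ ν μy G' φ}
      = {φ : X → ℂ | FE.MemL2 m' μ φ ∧ FE.IsFKap act μ ν μy Γ φ} := by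
  have hmeas : ∀ φ : X → ℂ, FE.MemL2 m' μ φ → StronglyMeasurable φ := fun φ hφ =>
    (hφ.1.mono hm'le le_rfl).stronglyMeasurable
  refine ⟨fun δ ε hδ hε φ hφ2 k ψ hψ hΓ g hg => ?_, ?_⟩
  · calc ν {y | ¬ ∃ i, eLpNorm (fun x => φ (act g x) - ψ i x) 2 (μy y) < ENNReal.ofReal (4 * ε)}
        = ν {y | ¬ ∃ i, eLpNorm (fun x => φ (act g x) - ψ i x) 2 (μy y)
            < ENNReal.ofReal ε + ENNReal.ofReal (3 * ε)} := by
          rw [← ENNReal.ofReal_add hε.le (by positivity), show ε + 3 * ε = 4 * ε by ring]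
      _ ≤ ENNReal.ofReal δ :=
          hdis.meas_not_exists_eLpNorm_comp_act_sub_lt_add_le_of_mem_closure hactmul hactMeas
            hactμ (hmeas φ hφ2) hφ2.2 (fun i => (hψ i).1) (by simpa using hε) ENNReal.ofReal_ne_top
            hΓ (hΓdense hg)
      _ ≤ ENNReal.ofReal (4 * δ) := ENNReal.ofReal_le_ofReal (by linarith)
  · ext φ
    exact ⟨fun ⟨hφ2, hap⟩ => ⟨hφ2, hap.mono hΓsub⟩, fun ⟨hφ2, hap⟩ =>
      ⟨hφ2, hap.of_subset_closure hdis hactmul hactMeas hactμ (hmeas φ hφ2) hφ2.2 hΓdense⟩⟩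

/-- **Lemma 1.4.** Let `G'` be an `R`-submodule of `G` and `Γ` a countable dense
subgroup of `G'`. If for some `δ ≥ 0`, `ε > 0`, `φ ∈ L²(X,𝒳',μ)` and
`ψ₁,…,ψ_k ∈ L²(X,𝒳,μ)` one has, for every `γ ∈ Γ`,
`min_i ‖U_γ φ − ψ_i‖_{2,y} < ε` outside a set of ν-measure `≤ δ`, then for every
`g ∈ G'`, `min_i ‖U_g φ − ψ_i‖_{2,y} < 4ε` outside a set of ν-measure `≤ 4δ`.
Consequently `L²_FKap(X,𝒳',μ,G:G') = L²_FKap(X,𝒳',μ,G:Γ)`. -/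
theorem lemma_1_4
    {R G X Y : Type*}
    [Ring R] [TopologicalSpace R] [IsTopologicalAddGroup R]
    [LocallyCompactSpace R] [SecondCountableTopology R] [T2Space R]
    [CommGroup G] [TopologicalSpace G] [IsTopologicalGroup G]
    [LocallyCompactSpace G] [SecondCountableTopology G] [T2Space G]
    [MeasurableSpace G] [BorelSpace G]
    (m' : MeasurableSpace X)
    [mX : MeasurableSpace X] [StandardBorelSpace X]
    [mY : MeasurableSpace Y]
    (σ : R → G → G)
    (hσmul : ∀ (t : R) (S T : G), σ t (S * T) = σ t S * σ t T)
    (hσadd : ∀ (r t : R) (S : G), σ (r + t) S = σ r S * σ t S)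
    (hσcont : Continuous fun p : R × G => σ p.1 p.2)
    (μ : Measure X) [IsProbabilityMeasure μ]
    (ν : Measure Y) [IsProbabilityMeasure ν]
    (act : G → X → X)
    (hact1 : ∀ x, act 1 x = x)
    (hactmul : ∀ g h x, act (g * h) x = act g (act h x))
    (hactMeas : Measurable fun p : G × X => act p.1 p.2)
    (hactμ : ∀ g, MeasurePreserving (act g) μ μ)
    (actY : G → Y → Y)
    (hactY1 : ∀ y, actY 1 y = y)
    (hactYmul : ∀ g h y, actY (g * h) y = actY g (actY h y))
    (hactYMeas : Measurable fun p : G × Y => actY p.1 p.2)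
    (hactYν : ∀ g, MeasurePreserving (actY g) ν ν)
    (π : X → Y) (hπ : Measurable π) (hπmp : MeasurePreserving π μ ν)
    (hπeq : ∀ g x, π (act g x) = actY g (π x))
    (hm'le : m' ≤ mX)
    (hm'Y : MeasurableSpace.comap π mY ≤ m')
    (hm'inv : ∀ (g : G) (A : Set X), MeasurableSet[m'] A → MeasurableSet[m'] (act g ⁻¹' A))
    (μy : Y → Measure X) (hdis : FE.Disintegration μ ν π μy)
    (G' : Set G) (hG' : FE.IsSubmoduleSet σ G')
    (Γ : Set G) (hΓsub : Γ ⊆ G') (hΓ1 : (1 : G) ∈ Γ)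
    (hΓmul : ∀ a ∈ Γ, ∀ b ∈ Γ, a * b ∈ Γ) (hΓinv : ∀ a ∈ Γ, a⁻¹ ∈ Γ)
    (hΓcnt : Γ.Countable) (hΓdense : G' ⊆ closure Γ) :
    (∀ δ ε : ℝ, 0 ≤ δ → 0 < ε →
      ∀ φ : X → ℂ, FE.MemL2 m' μ φ →
      ∀ (k : ℕ) (ψ : Fin k → X → ℂ), (∀ i, MemLp (ψ i) 2 μ) →
      (∀ γ ∈ Γ,
        ν {y | ¬ ∃ i, eLpNorm (fun x => φ (act γ x) - ψ i x) 2 (μy y)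
          < ENNReal.ofReal ε} ≤ ENNReal.ofReal δ) →
      ∀ g ∈ G',
        ν {y | ¬ ∃ i, eLpNorm (fun x => φ (act g x) - ψ i x) 2 (μy y)
          < ENNReal.ofReal (4 * ε)} ≤ ENNReal.ofReal (4 * δ)) ∧
    {φ : X → ℂ | FE.MemL2 m' μ φ ∧ FE.IsFKap act μ ν μy G' φ}
      = {φ : X → ℂ | FE.MemL2 m' μ φ ∧ FE.IsFKap act μ ν μy Γ φ} :=
  lemma_1_4_general m' (mX := mX) (mY := mY) μ ν act hactmul hactMeas hactμ π hm'le μy hdis G' Γ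
    hΓsub hΓdense
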